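/- arXiv:1903.11763 — 2 statements merged into one kernel-verified Lean document; each statement's English description precedes it below -/
import Mathlib

section
/- Define value functions by backward recursion: V_{N+1}(P, Pₑ) = 0 and V_k(P, Pₑ) = min over a ∈ {0,1} of [c(P, Pₑ, a) + P₀₀(a)·V_{k+1}(h(P), h(Pₑ)) + P₀₁(a)·V_{k+1}(h(P), P*) + P₁₀(a)·V_{k+1}(P*, h(Pₑ)) + P₁₁(a)·V_{k+1}(P*, P*)]. Then for every k ∈ {1,…,N+1}, V_k(P, Pₑ) is increasing in P: if P ≤ P′ in the Loewner order then V_k(P, Pₑ) ≤ V_k(P′, Pₑ). -/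
/-!
Work in the Loewner order. The Lyapunov map `h` is monotone (congruence by `A` preserves
positive semidefiniteness) and the trace is a positive functional, so each stage cost is
monotone in `P`, its coefficient of `tr (h P)` being `β` times a probability. Backward induction
then propagates monotonicity: for each action, the continuation terms that depend on `P` are
`V_{k+1}(h P, ·)` with nonnegative weights, the others do not involve `P`, and a minimum of
monotone functions is monotone.
-/

open Matrix
open scoped MatrixOrder

theorem monotone_conjugate_add {R : Type*} [NonUnitalSemiring R] [PartialOrder R] [StarRing R]
    [StarOrderedRing R] (a q : R) : Monotone fun x => a * x * star a + q :=
  fun _ _ hxy => add_le_add_left (star_right_conjugate_le_conjugate hxy a) q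

theorem Matrix.trace_monotone {n : Type*} [Fintype n] : Monotone (trace : Matrix n n ℝ → ℝ) :=
  (tracePositiveLinearMap n ℝ ℝ).monotone'

theorem Monotone.add_mul_comp_add_mul_comp {α σ : Type*} [Preorder α] {cost : α → ℝ}
    {W : α → σ → ℝ} {f : α → α} (hcost : Monotone cost) (hW : ∀ s, Monotone (W · s))
    (hf : Monotone f) {p q : ℝ} (hp : 0 ≤ p) (hq : 0 ≤ q) (s₁ s₂ : σ) (r₁ r₂ : ℝ) :
    Monotone fun x => cost x + p * W (f x) s₁ + q * W (f x) s₂ + r₁ + r₂ :=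
  (((hcost.add (((hW s₁).comp hf).const_mul hp)).add (((hW s₂).comp hf).const_mul hq)).add_const
    r₁).add_const r₂

theorem value_function_increasing_in_P_general {n N : ℕ}
    (A Q Pstar : Matrix (Fin n) (Fin n) ℝ)
    (h : Matrix (Fin n) (Fin n) ℝ → Matrix (Fin n) (Fin n) ℝ)
    (hdef : ∀ X, h X = A * X * Aᵀ + Q)
    (lam lamE e1 e2 : ℝ)
    (hlam : 0 ≤ lam ∧ lam ≤ 1) (hlamE : 0 ≤ lamE ∧ lamE ≤ 1)
    (he1 : 0 ≤ e1 ∧ e1 ≤ 1) (he2 : 0 ≤ e2 ∧ e2 ≤ 1)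
    (β C : ℝ) (hβ : 0 < β ∧ β < 1)
    (P00 P01 P10 P11 : ℝ → ℝ)
    (h00 : P00 0 = (1 - lam) * (1 - lamE) ∧ P00 1 = (1 - e1 * lam) * (1 - e2 * lamE))
    (h01 : P01 0 = (1 - lam) * lamE ∧ P01 1 = (1 - e1 * lam) * (e2 * lamE))
    (c : Matrix (Fin n) (Fin n) ℝ → Matrix (Fin n) (Fin n) ℝ → ℝ → ℝ)
    (hc : ∀ P Pe (a : ℝ), c P Pe a =
      a * C
      + β * ((a * e1 * lam + (1 - a) * lam) * Pstar.trace
          + (1 - a * e1 * lam - (1 - a) * lam) * (h P).trace)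
      - (1 - β) * ((a * e2 * lamE + (1 - a) * lamE) * Pstar.trace
          + (1 - a * e2 * lamE - (1 - a) * lamE) * (h Pe).trace))
    (V : ℕ → Matrix (Fin n) (Fin n) ℝ → Matrix (Fin n) (Fin n) ℝ → ℝ)
    (hVend : ∀ P Pe, V (N + 1) P Pe = 0)
    (hVrec : ∀ k, 1 ≤ k → k ≤ N → ∀ P Pe, V k P Pe =
      min (c P Pe 0 + P00 0 * V (k + 1) (h P) (h Pe) + P01 0 * V (k + 1) (h P) Pstar
            + P10 0 * V (k + 1) Pstar (h Pe) + P11 0 * V (k + 1) Pstar Pstar)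
          (c P Pe 1 + P00 1 * V (k + 1) (h P) (h Pe) + P01 1 * V (k + 1) (h P) Pstar
            + P10 1 * V (k + 1) Pstar (h Pe) + P11 1 * V (k + 1) Pstar Pstar)) :
    ∀ k, 1 ≤ k → k ≤ N + 1 →
      ∀ P P' Pe : Matrix (Fin n) (Fin n) ℝ, P.PosSemidef → P'.PosSemidef → Pe.PosSemidef →
        (P' - P).PosSemidef → V k P Pe ≤ V k P' Pe := by
  obtain ⟨hlam0, hlam1⟩ := hlam
  obtain ⟨hlamE0, hlamE1⟩ := hlamE
  have hh : Monotone h := by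
    simpa only [funext hdef, star_eq_conjTranspose, conjTranspose_eq_transpose_of_trivial]
      using monotone_conjugate_add A Q
  have he1lam : e1 * lam ≤ 1 := mul_le_one₀ he1.2 hlam0 hlam1
  have he2lamE : e2 * lamE ≤ 1 := mul_le_one₀ he2.2 hlamE0 hlamE1
  have hcost : ∀ Pe a, 0 ≤ a → a ≤ 1 → Monotone (c · Pe a) := by
    intro Pe a ha0 ha1
    have hcoef : 0 ≤ 1 - a * e1 * lam - (1 - a) * lam := by nlinarith
    have hβ0 : 0 ≤ β := hβ.1.le
    intro P P' hPP'
    simp only [hc]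
    gcongr _ + β * (_ + _ * ?_) - _
    exact trace_monotone (hh hPP')
  have hp0 : 0 ≤ P00 0 ∧ 0 ≤ P01 0 := by
    rw [h00.1, h01.1]
    exact ⟨mul_nonneg (by linarith) (by linarith), mul_nonneg (by linarith) hlamE0⟩
  have hp1 : 0 ≤ P00 1 ∧ 0 ≤ P01 1 := by
    rw [h00.2, h01.2]
    exact ⟨mul_nonneg (by linarith) (by linarith),
      mul_nonneg (by linarith) (mul_nonneg he2.1 hlamE0)⟩
  have hV : ∀ k, k ≤ N + 1 → 1 ≤ k → ∀ Pe, Monotone (V k · Pe) := by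
    intro k hk
    induction hk using Nat.decreasingInduction with
    | self => exact fun _ _ => by simp only [hVend]; exact monotone_const
    | of_succ k hkN ih =>
      intro hk1 Pe
      rw [funext (hVrec k hk1 (by omega) · Pe)]
      exact .min
        ((hcost Pe 0 le_rfl zero_le_one).add_mul_comp_add_mul_comp (ih (by omega)) hh
          hp0.1 hp0.2 _ _ _ _)
        ((hcost Pe 1 zero_le_one le_rfl).add_mul_comp_add_mul_comp (ih (by omega)) hh
          hp1.1 hp1.2 _ _ _ _)
  exact fun k hk1 hkN P P' Pe _ _ _ hPP' => hV k hkN hk1 Pe hPP'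

/-- The backward-recursion value function is increasing in `P` (Loewner order). -/
theorem value_function_increasing_in_P {n N : ℕ}
    (A Q Pstar : Matrix (Fin n) (Fin n) ℝ) (hQ : Q.PosSemidef) (hPstar : Pstar.PosSemidef)
    (h : Matrix (Fin n) (Fin n) ℝ → Matrix (Fin n) (Fin n) ℝ)
    (hdef : ∀ X, h X = A * X * Aᵀ + Q)
    (lam lamE e1 e2 : ℝ)
    (hlam : 0 ≤ lam ∧ lam ≤ 1) (hlamE : 0 ≤ lamE ∧ lamE ≤ 1)
    (he1 : 0 ≤ e1 ∧ e1 ≤ 1) (he2 : 0 ≤ e2 ∧ e2 ≤ 1)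
    (β C : ℝ) (hβ : 0 < β ∧ β < 1) (hC : 0 ≤ C)
    (P00 P01 P10 P11 : ℝ → ℝ)
    (h00 : P00 0 = (1 - lam) * (1 - lamE) ∧ P00 1 = (1 - e1 * lam) * (1 - e2 * lamE))
    (h01 : P01 0 = (1 - lam) * lamE ∧ P01 1 = (1 - e1 * lam) * (e2 * lamE))
    (h10 : P10 0 = lam * (1 - lamE) ∧ P10 1 = e1 * lam * (1 - e2 * lamE))
    (h11 : P11 0 = lam * lamE ∧ P11 1 = e1 * lam * (e2 * lamE))
    (c : Matrix (Fin n) (Fin n) ℝ → Matrix (Fin n) (Fin n) ℝ → ℝ → ℝ)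
    (hc : ∀ P Pe (a : ℝ), c P Pe a =
      a * C
      + β * ((a * e1 * lam + (1 - a) * lam) * Pstar.trace
          + (1 - a * e1 * lam - (1 - a) * lam) * (h P).trace)
      - (1 - β) * ((a * e2 * lamE + (1 - a) * lamE) * Pstar.trace
          + (1 - a * e2 * lamE - (1 - a) * lamE) * (h Pe).trace))
    (V : ℕ → Matrix (Fin n) (Fin n) ℝ → Matrix (Fin n) (Fin n) ℝ → ℝ)
    (hVend : ∀ P Pe, V (N + 1) P Pe = 0)
    (hVrec : ∀ k, 1 ≤ k → k ≤ N → ∀ P Pe, V k P Pe =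
      min (c P Pe 0 + P00 0 * V (k + 1) (h P) (h Pe) + P01 0 * V (k + 1) (h P) Pstar
            + P10 0 * V (k + 1) Pstar (h Pe) + P11 0 * V (k + 1) Pstar Pstar)
          (c P Pe 1 + P00 1 * V (k + 1) (h P) (h Pe) + P01 1 * V (k + 1) (h P) Pstar
            + P10 1 * V (k + 1) Pstar (h Pe) + P11 1 * V (k + 1) Pstar Pstar)) :
    ∀ k, 1 ≤ k → k ≤ N + 1 →
      ∀ P P' Pe : Matrix (Fin n) (Fin n) ℝ, P.PosSemidef → P'.PosSemidef → Pe.PosSemidef →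
        (P' - P).PosSemidef → V k P Pe ≤ V k P' Pe :=
  value_function_increasing_in_P_general A Q Pstar h hdef lam lamE e1 e2 hlam hlamE he1 he2 β C hβ
    P00 P01 P10 P11 h00 h01 c hc V hVend hVrec
end

section
/- With the same backward recursion for V_k, the value function V_k(P, Pₑ) is decreasing in Pₑ for every k ∈ {1,…,N+1}: if Pₑ ≤ Pₑ′ in the Loewner order then V_k(P, Pₑ) ≥ V_k(P, Pₑ′). -/
/-!
Backward induction from `V (N + 1) = 0`. The map `h X = A X Aᵀ + Q` is Loewner-monotone, so if
every `V (k + 1) x` is antitone then so is each action's value as a function of `Pₑ`: the stage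
cost decreases because the trace is Loewner-monotone and enters with the nonpositive weight
`-(1 - β)(1 - aε₂λₑ - (1 - a)λₑ)`, the terms through `h Pₑ` carry nonnegative probabilities, and
the terms reset to `P*` do not depend on `Pₑ`. A minimum of antitone functions is antitone.
-/

open Matrix
open scoped MatrixOrder

namespace Matrix

variable {ι : Type*} [Fintype ι]

lemma trace_mono {X Y : Matrix ι ι ℝ} (hXY : X ≤ Y) : X.trace ≤ Y.trace :=
  sub_nonneg.mp (trace_sub Y X ▸ (le_iff.mp hXY).trace_nonneg)

lemma monotone_mul_mul_transpose_add (A Q : Matrix ι ι ℝ) :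
    Monotone fun X => A * X * Aᵀ + Q := fun X Y hXY => by
  simpa only [add_le_add_iff_right, star_eq_conjTranspose,
    conjTranspose_eq_transpose_of_trivial] using star_right_conjugate_le_conjugate hXY A

end Matrix

section BackwardInduction

variable {α β : Type*} [Preorder β]

lemma antitone_actionValue {c : β → ℝ} (hc : Antitone c) {W : α → β → ℝ}
    (hW : ∀ x, Antitone (W x)) {g : β → β} (hg : Monotone g) {p q : ℝ} (hp : 0 ≤ p)
    (hq : 0 ≤ q) (x y : α) (s t : ℝ) :
    Antitone fun e => c e + p * W x (g e) + s + q * W y (g e) + t :=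
  ((((hc.add (((hW x).comp_monotone hg).const_mul hp)).add_const s).add
    (((hW y).comp_monotone hg).const_mul hq)).add_const t)

theorem antitone_valueFunction {N : ℕ} {f : α → α} {g : β → β} (hg : Monotone g)
    {x₀ : α} {e₀ : β} {c : α → β → ℝ → ℝ} (hc : ∀ x a, a = 0 ∨ a = 1 → Antitone fun e => c x e a)
    {p00 p01 p10 p11 : ℝ → ℝ} (hp00 : ∀ a, a = 0 ∨ a = 1 → 0 ≤ p00 a)
    (hp10 : ∀ a, a = 0 ∨ a = 1 → 0 ≤ p10 a)
    {V : ℕ → α → β → ℝ} (hVend : ∀ x e, V (N + 1) x e = 0)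
    (hVrec : ∀ k, 1 ≤ k → k ≤ N → ∀ x e, V k x e =
      min (c x e 0 + p00 0 * V (k + 1) (f x) (g e) + p01 0 * V (k + 1) (f x) e₀
            + p10 0 * V (k + 1) x₀ (g e) + p11 0 * V (k + 1) x₀ e₀)
          (c x e 1 + p00 1 * V (k + 1) (f x) (g e) + p01 1 * V (k + 1) (f x) e₀
            + p10 1 * V (k + 1) x₀ (g e) + p11 1 * V (k + 1) x₀ e₀))
    {k : ℕ} (hk : 1 ≤ k) (hkN : k ≤ N + 1) (x : α) : Antitone (V k x) := by
  induction hkN using Nat.decreasingInduction generalizing x with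
  | self => exact fun e e' _ => ((hVend x e').trans (hVend x e).symm).le
  | of_succ k hk' ih =>
    have hW : ∀ y, Antitone (V (k + 1) y) := ih (by omega)
    have hstep : ∀ a, a = 0 ∨ a = 1 → Antitone fun e => c x e a + p00 a * V (k + 1) (f x) (g e)
        + p01 a * V (k + 1) (f x) e₀ + p10 a * V (k + 1) x₀ (g e) + p11 a * V (k + 1) x₀ e₀ :=
      fun a ha => antitone_actionValue (hc x a ha) hW hg (hp00 a ha) (hp10 a ha) _ _ _ _
    rw [show V k x = _ from funext (hVrec k hk (by omega) x)]
    exact (hstep 0 (.inl rfl)).min (hstep 1 (.inr rfl))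

end BackwardInduction

theorem value_function_decreasing_in_Pe_general {n N : ℕ}
    (A Q Pstar : Matrix (Fin n) (Fin n) ℝ)
    (h : Matrix (Fin n) (Fin n) ℝ → Matrix (Fin n) (Fin n) ℝ)
    (hdef : ∀ X, h X = A * X * Aᵀ + Q)
    (lam lamE e1 e2 : ℝ)
    (hlam : 0 ≤ lam ∧ lam ≤ 1) (hlamE : 0 ≤ lamE ∧ lamE ≤ 1)
    (he1 : 0 ≤ e1 ∧ e1 ≤ 1) (he2 : 0 ≤ e2 ∧ e2 ≤ 1)
    (β C : ℝ) (hβ : 0 < β ∧ β < 1)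
    (P00 P01 P10 P11 : ℝ → ℝ)
    (h00 : P00 0 = (1 - lam) * (1 - lamE) ∧ P00 1 = (1 - e1 * lam) * (1 - e2 * lamE))
    (h10 : P10 0 = lam * (1 - lamE) ∧ P10 1 = e1 * lam * (1 - e2 * lamE))
    (c : Matrix (Fin n) (Fin n) ℝ → Matrix (Fin n) (Fin n) ℝ → ℝ → ℝ)
    (hc : ∀ P Pe (a : ℝ), c P Pe a =
      a * C
      + β * ((a * e1 * lam + (1 - a) * lam) * Pstar.trace
          + (1 - a * e1 * lam - (1 - a) * lam) * (h P).trace)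
      - (1 - β) * ((a * e2 * lamE + (1 - a) * lamE) * Pstar.trace
          + (1 - a * e2 * lamE - (1 - a) * lamE) * (h Pe).trace))
    (V : ℕ → Matrix (Fin n) (Fin n) ℝ → Matrix (Fin n) (Fin n) ℝ → ℝ)
    (hVend : ∀ P Pe, V (N + 1) P Pe = 0)
    (hVrec : ∀ k, 1 ≤ k → k ≤ N → ∀ P Pe, V k P Pe =
      min (c P Pe 0 + P00 0 * V (k + 1) (h P) (h Pe) + P01 0 * V (k + 1) (h P) Pstar
            + P10 0 * V (k + 1) Pstar (h Pe) + P11 0 * V (k + 1) Pstar Pstar)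
          (c P Pe 1 + P00 1 * V (k + 1) (h P) (h Pe) + P01 1 * V (k + 1) (h P) Pstar
            + P10 1 * V (k + 1) Pstar (h Pe) + P11 1 * V (k + 1) Pstar Pstar)) :
    ∀ k, 1 ≤ k → k ≤ N + 1 →
      ∀ P Pe Pe' : Matrix (Fin n) (Fin n) ℝ, P.PosSemidef → Pe.PosSemidef → Pe'.PosSemidef →
        (Pe' - Pe).PosSemidef → V k P Pe' ≤ V k P Pe := by
  have hh : Monotone h := by
    rw [show h = _ from funext hdef]
    exact monotone_mul_mul_transpose_add A Q
  have he1lam : e1 * lam ≤ 1 := mul_le_one₀ he1.2 hlam.1 hlam.2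
  have he2lamE : e2 * lamE ≤ 1 := mul_le_one₀ he2.2 hlamE.1 hlamE.2
  have hcost : ∀ P a, a = 0 ∨ a = 1 → Antitone fun Pe => c P Pe a := by
    intro P a ha Pe Pe' hle
    have hweight : 0 ≤ (1 - β) * (1 - a * e2 * lamE - (1 - a) * lamE) :=
      mul_nonneg (by linarith) (by rcases ha with rfl | rfl <;> linarith)
    have := mul_le_mul_of_nonneg_left (trace_mono (hh hle)) hweight
    simp only [hc]
    linarith
  have hp00 : ∀ a, a = 0 ∨ a = 1 → 0 ≤ P00 a := by
    rintro a (rfl | rfl)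
    · rw [h00.1]; exact mul_nonneg (by linarith) (by linarith)
    · rw [h00.2]; exact mul_nonneg (by linarith) (by linarith)
  have hp10 : ∀ a, a = 0 ∨ a = 1 → 0 ≤ P10 a := by
    rintro a (rfl | rfl)
    · rw [h10.1]; exact mul_nonneg hlam.1 (by linarith)
    · rw [h10.2]; exact mul_nonneg (mul_nonneg he1.1 hlam.1) (by linarith)
  intro k hk hkN P Pe Pe' _ _ _ hle
  exact antitone_valueFunction hh hcost hp00 hp10 hVend hVrec hk hkN P hle

/-- The backward-recursion value function is decreasing in `Pₑ` (Loewner order). -/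
theorem value_function_decreasing_in_Pe {n N : ℕ}
    (A Q Pstar : Matrix (Fin n) (Fin n) ℝ) (hQ : Q.PosSemidef) (hPstar : Pstar.PosSemidef)
    (h : Matrix (Fin n) (Fin n) ℝ → Matrix (Fin n) (Fin n) ℝ)
    (hdef : ∀ X, h X = A * X * Aᵀ + Q)
    (lam lamE e1 e2 : ℝ)
    (hlam : 0 ≤ lam ∧ lam ≤ 1) (hlamE : 0 ≤ lamE ∧ lamE ≤ 1)
    (he1 : 0 ≤ e1 ∧ e1 ≤ 1) (he2 : 0 ≤ e2 ∧ e2 ≤ 1)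
    (β C : ℝ) (hβ : 0 < β ∧ β < 1) (hC : 0 ≤ C)
    (P00 P01 P10 P11 : ℝ → ℝ)
    (h00 : P00 0 = (1 - lam) * (1 - lamE) ∧ P00 1 = (1 - e1 * lam) * (1 - e2 * lamE))
    (h01 : P01 0 = (1 - lam) * lamE ∧ P01 1 = (1 - e1 * lam) * (e2 * lamE))
    (h10 : P10 0 = lam * (1 - lamE) ∧ P10 1 = e1 * lam * (1 - e2 * lamE))
    (h11 : P11 0 = lam * lamE ∧ P11 1 = e1 * lam * (e2 * lamE))
    (c : Matrix (Fin n) (Fin n) ℝ → Matrix (Fin n) (Fin n) ℝ → ℝ → ℝ)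
    (hc : ∀ P Pe (a : ℝ), c P Pe a =
      a * C
      + β * ((a * e1 * lam + (1 - a) * lam) * Pstar.trace
          + (1 - a * e1 * lam - (1 - a) * lam) * (h P).trace)
      - (1 - β) * ((a * e2 * lamE + (1 - a) * lamE) * Pstar.trace
          + (1 - a * e2 * lamE - (1 - a) * lamE) * (h Pe).trace))
    (V : ℕ → Matrix (Fin n) (Fin n) ℝ → Matrix (Fin n) (Fin n) ℝ → ℝ)
    (hVend : ∀ P Pe, V (N + 1) P Pe = 0)
    (hVrec : ∀ k, 1 ≤ k → k ≤ N → ∀ P Pe, V k P Pe =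
      min (c P Pe 0 + P00 0 * V (k + 1) (h P) (h Pe) + P01 0 * V (k + 1) (h P) Pstar
            + P10 0 * V (k + 1) Pstar (h Pe) + P11 0 * V (k + 1) Pstar Pstar)
          (c P Pe 1 + P00 1 * V (k + 1) (h P) (h Pe) + P01 1 * V (k + 1) (h P) Pstar
            + P10 1 * V (k + 1) Pstar (h Pe) + P11 1 * V (k + 1) Pstar Pstar)) :
    ∀ k, 1 ≤ k → k ≤ N + 1 →
      ∀ P Pe Pe' : Matrix (Fin n) (Fin n) ℝ, P.PosSemidef → Pe.PosSemidef → Pe'.PosSemidef →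
        (Pe' - Pe).PosSemidef → V k P Pe' ≤ V k P Pe :=
  value_function_decreasing_in_Pe_general A Q Pstar h hdef lam lamE e1 e2 hlam hlamE he1 he2 β C hβ
    P00 P01 P10 P11 h00 h10 c hc V hVend hVrec
end
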